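/- Let ψ : Nat.Partrec.Code → Prop be a functional property captured by a language L that is computably succinct for ψ: there is a computable function f : ℕ → ℕ such that for every code g with ψ g there is g' ∈ L with eval g' = eval g and Encodable.encode g' ≤ f (Encodable.encode g). Then ψ is Π⁰₂: there exists a decidable relation R (ComputablePred on Nat.Partrec.Code × ℕ × ℕ) such that for every code g, ψ g ↔ ∀ a : ℕ, ∃ b : ℕ, R (g, a, b). -/

import Mathlib

/-!
By succinctness, `ψ g` holds iff some code of index at most `f (encode g)` lies in `L` and
computes the same function as `g`. Equality of partial recursive functions is `Π⁰₂`: every value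
that one code produces within `s` steps the other produces within some number of steps. And `Π⁰₂`
predicates are closed under conjunction and under bounded existential quantification; for the
latter the finitely many universal (and existential) witnesses are coded into one number.
-/

open Nat.Partrec (Code)
open Nat.Partrec.Code Encodable Denumerable Computable

namespace ComputablePred

variable {α β : Type*} [Primcodable α] [Primcodable β]

theorem comp {p : β → Prop} (hp : ComputablePred p) {g : α → β} (hg : Computable g) :
    ComputablePred fun a => p (g a) := by
  classical
  exact (hp.decide.comp hg).computablePred

protected theorem and {p q : α → Prop} (hp : ComputablePred p) (hq : ComputablePred q) :
    ComputablePred fun a => p a ∧ q a := by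
  classical
  exact computablePred_iff_computable_decide.2
    ((Primrec.and.to_comp.comp hp.decide hq.decide).of_eq fun a => by simp)

theorem exists_lt {p : α × ℕ → Prop} (hp : ComputablePred p) {N : α → ℕ} (hN : Computable N) :
    ComputablePred fun a => ∃ e < N a, p (a, e) := by
  classical
  have hrec : Computable fun a =>
      Nat.rec (motive := fun _ => Bool) false (fun e acc => acc || decide (p (a, e))) (N a) :=
    nat_rec hN (const false)
      (Primrec.or.to_comp.comp (snd.comp snd) (hp.decide.comp (pair fst (fst.comp snd)))).to₂
  refine computablePred_iff_computable_decide.2 (hrec.of_eq fun a => ?_)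
  induction N a with
  | zero => simp
  | succ n ih => simp only [Nat.exists_lt_succ_right, Bool.decide_or, ih]

end ComputablePred

def Pi02Pred {α : Type*} [Primcodable α] (p : α → Prop) : Prop :=
  ∃ R : α × ℕ × ℕ → Prop, ComputablePred R ∧ ∀ a, p a ↔ ∀ x, ∃ y, R (a, x, y)

namespace Pi02Pred

variable {α β : Type*} [Primcodable α] [Primcodable β]

theorem of_iff {p q : α → Prop} (hp : Pi02Pred p) (h : ∀ a, p a ↔ q a) : Pi02Pred q :=
  funext (fun a => propext (h a)) ▸ hp

theorem comp {p : β → Prop} (hp : Pi02Pred p) {g : α → β} (hg : Computable g) :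
    Pi02Pred fun a => p (g a) := by
  obtain ⟨R, hR, hpR⟩ := hp
  exact ⟨fun q => R (g q.1, q.2), hR.comp (pair (hg.comp fst) snd), fun a => hpR (g a)⟩

theorem _root_.ComputablePred.pi02Pred {p : α → Prop} (hp : ComputablePred p) : Pi02Pred p :=
  ⟨fun q => p q.1, hp.comp fst, fun a => by simp⟩

protected theorem and {p q : α → Prop} (hp : Pi02Pred p) (hq : Pi02Pred q) :
    Pi02Pred fun a => p a ∧ q a := by
  obtain ⟨R, hR, hpR⟩ := hp
  obtain ⟨S, hS, hqS⟩ := hq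
  refine ⟨fun r => R (r.1, r.2.1.unpair.1, r.2.2.unpair.1) ∧
    S (r.1, r.2.1.unpair.2, r.2.2.unpair.2), ?_, fun a => ?_⟩
  · have hu : Computable Nat.unpair := Primrec.unpair.to_comp
    exact (hR.comp (pair fst (pair (fst.comp (hu.comp (fst.comp snd)))
        (fst.comp (hu.comp (snd.comp snd)))))).and
      (hS.comp (pair fst (pair (snd.comp (hu.comp (fst.comp snd)))
        (snd.comp (hu.comp (snd.comp snd))))))
  · change p a ∧ q a ↔ _
    rw [hpR, hqS]
    constructor
    · rintro ⟨hR', hS'⟩ x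
      obtain ⟨y₁, hy₁⟩ := hR' x.unpair.1
      obtain ⟨y₂, hy₂⟩ := hS' x.unpair.2
      exact ⟨Nat.pair y₁ y₂, by simpa using hy₁, by simpa using hy₂⟩
    · intro h
      refine ⟨fun x₁ => ?_, fun x₂ => ?_⟩
      · obtain ⟨y, hy, -⟩ := h (Nat.pair x₁ 0)
        exact ⟨_, by simpa using hy⟩
      · obtain ⟨y, -, hy⟩ := h (Nat.pair 0 x₂)
        exact ⟨_, by simpa using hy⟩

-- The `e`-th entries of the lists coded by `x` and `y` serve as the quantified variables of the
-- `e`-th instance; a universal list `x` refuting every instance is chosen entrywise.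
theorem exists_lt {p : α × ℕ → Prop} (hp : Pi02Pred p) {N : α → ℕ} (hN : Computable N) :
    Pi02Pred fun a => ∃ e < N a, p (a, e) := by
  obtain ⟨R, hR, hpR⟩ := hp
  refine ⟨fun r => ∃ e < N r.1,
    R ((r.1, e), (ofNat (List ℕ) r.2.1).getD e 0, (ofNat (List ℕ) r.2.2).getD e 0), ?_, fun a => ?_⟩
  · have hget : Computable₂ fun (n e : ℕ) => (ofNat (List ℕ) n).getD e 0 :=
      ((Primrec.list_getD 0).comp ((Primrec.ofNat _).comp Primrec.fst) Primrec.snd).to_comp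
    exact (hR.comp (pair (pair (fst.comp fst) snd)
      (pair (hget.comp (fst.comp (snd.comp fst)) snd)
        (hget.comp (snd.comp (snd.comp fst)) snd)))).exists_lt (hN.comp fst)
  constructor
  · rintro ⟨e, he, hpe⟩ x
    obtain ⟨y, hy⟩ := (hpR _).1 hpe ((ofNat (List ℕ) x).getD e 0)
    exact ⟨encode (List.replicate (e + 1) y), e, he, by simpa using hy⟩
  · intro h
    by_contra! hfalse
    have hrefute : ∀ e < N a, ∃ x, ∀ y, ¬ R ((a, e), x, y) := fun e he => by
      simpa using mt (hpR (a, e)).2 (hfalse e he)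
    choose! x hx using hrefute
    obtain ⟨y, e, he, hRe⟩ := h (encode ((List.range (N a)).map x))
    exact hx e he _ (by simpa [he] using hRe)

end Pi02Pred

theorem pi02Pred_eval_graph_subset :
    Pi02Pred fun cd : Code × Code => cd.1.eval.graph ⊆ cd.2.eval.graph := by
  refine ⟨fun r => ∀ v ∈ evaln r.2.1.unpair.2 r.1.1 r.2.1.unpair.1,
    v ∈ evaln r.2.2 r.1.2 r.2.1.unpair.1, ?_, fun cd => ?_⟩
  · have hsub : PrimrecPred fun o : Option ℕ × Option ℕ => ∀ v ∈ o.1, v ∈ o.2 :=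
      (PrimrecPred.or (Primrec.eq.comp Primrec.fst (Primrec.const (Option.none : Option ℕ)))
        (Primrec.eq.comp Primrec.fst Primrec.snd)).of_eq fun o => by
          rcases o with ⟨_ | v, o⟩ <;> simp [eq_comm]
    have hinput : Primrec fun r : (Code × Code) × ℕ × ℕ => r.2.1.unpair.1 :=
      Primrec.fst.comp (Primrec.unpair.comp (Primrec.fst.comp Primrec.snd))
    have hfuel : Primrec fun r : (Code × Code) × ℕ × ℕ => r.2.1.unpair.2 :=
      Primrec.snd.comp (Primrec.unpair.comp (Primrec.fst.comp Primrec.snd))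
    exact (hsub.comp ((primrec_evaln.comp ((hfuel.pair (Primrec.fst.comp Primrec.fst)).pair hinput)).pair
      (primrec_evaln.comp (((Primrec.snd.comp Primrec.snd).pair
        (Primrec.snd.comp Primrec.fst)).pair hinput)))).computablePred
  · constructor
    · intro h x
      cases hx : evaln x.unpair.2 cd.1 x.unpair.1 with
      | none => exact ⟨0, by simp [hx]⟩
      | some v =>
        obtain ⟨b, hb⟩ := evaln_complete.1 (h (a := (x.unpair.1, v)) (evaln_sound hx))
        exact ⟨b, by simpa [hx] using hb⟩
    · rintro h ⟨n, v⟩ hv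
      obtain ⟨s, hs⟩ := evaln_complete.1 hv
      obtain ⟨b, hb⟩ := h (Nat.pair n s)
      simp only [Nat.unpair_pair] at hb
      exact evaln_sound (hb v hs)

theorem pi02Pred_eval_eq : Pi02Pred fun cd : Code × Code => cd.1.eval = cd.2.eval :=
  (pi02Pred_eval_graph_subset.and (pi02Pred_eval_graph_subset.comp (pair snd fst))).of_iff
    fun _ => ⟨fun ⟨h₁, h₂⟩ => funext fun n => Part.ext fun v => ⟨@h₁ (n, v), @h₂ (n, v)⟩,
      fun h => by simp [h]⟩

theorem succinct_capture_pi02_general (ψ : Nat.Partrec.Code → Prop)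
    (hfunc : ∀ c c' : Nat.Partrec.Code, c.eval = c'.eval → (ψ c ↔ ψ c'))
    (L : Set Nat.Partrec.Code) (hL : ComputablePred (· ∈ L))
    (hsound : ∀ c ∈ L, ψ c)
    (f : ℕ → ℕ) (hf : Computable f)
    (hsucc : ∀ g : Nat.Partrec.Code, ψ g → ∃ g' ∈ L, g'.eval = g.eval ∧
      Encodable.encode g' ≤ f (Encodable.encode g)) :
    ∃ R : Nat.Partrec.Code × ℕ × ℕ → Prop, ComputablePred R ∧
      ∀ g : Nat.Partrec.Code, ψ g ↔ ∀ a : ℕ, ∃ b : ℕ, R (g, a, b) := by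
  have hψ : ∀ g, ψ g ↔
      ∃ e < f (encode g) + 1, ofNat Code e ∈ L ∧ (ofNat Code e).eval = g.eval := fun g =>
    ⟨fun hg => by
      obtain ⟨g', hg'L, hev, hle⟩ := hsucc g hg
      exact ⟨encode g', Nat.lt_succ_of_le hle, by simpa using hg'L, by simpa using hev⟩,
    fun ⟨_, _, heL, hev⟩ => (hfunc _ _ hev).1 (hsound _ heL)⟩
  have hcode : Computable fun q : Code × ℕ => ofNat Code q.2 := (Computable.ofNat Code).comp snd
  obtain ⟨R, hR, hpi⟩ : Pi02Pred fun g : Code =>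
      ∃ e < f (encode g) + 1, ofNat Code e ∈ L ∧ (ofNat Code e).eval = g.eval :=
    ((hL.comp hcode).pi02Pred.and (pi02Pred_eval_eq.comp (pair hcode fst))).exists_lt
      (succ.comp (hf.comp Computable.encode))
  exact ⟨R, hR, fun g => (hψ g).trans (hpi g)⟩

theorem succinct_capture_pi02 (ψ : Nat.Partrec.Code → Prop)
    (hfunc : ∀ c c' : Nat.Partrec.Code, c.eval = c'.eval → (ψ c ↔ ψ c'))
    (L : Set Nat.Partrec.Code) (hL : ComputablePred (· ∈ L))
    (hsound : ∀ c ∈ L, ψ c)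
    (hcomplete : ∀ c : Nat.Partrec.Code, ψ c → ∃ c' ∈ L, c'.eval = c.eval)
    (f : ℕ → ℕ) (hf : Computable f)
    (hsucc : ∀ g : Nat.Partrec.Code, ψ g → ∃ g' ∈ L, g'.eval = g.eval ∧
      Encodable.encode g' ≤ f (Encodable.encode g)) :
    ∃ R : Nat.Partrec.Code × ℕ × ℕ → Prop, ComputablePred R ∧
      ∀ g : Nat.Partrec.Code, ψ g ↔ ∀ a : ℕ, ∃ b : ℕ, R (g, a, b) :=
  succinct_capture_pi02_general ψ hfunc L hL hsound f hf hsucc
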